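/- Let M be a smooth manifold and let 𝓕 be an admissible sheaf of local vector fields on M. Let γ : [a,b] → M be a continuous path and assume that κ^𝓕_{γ(t)} is constant for t ∈ [a,b]. Then, for every germ 𝔤_* ∈ 𝔊^𝓕_{γ(a)} there exists a unique transport [a,b] ∋ t ↦ 𝔤_t ∈ 𝔊^𝓕_{γ(t)} of 𝓕-germs along γ with 𝔤_a = 𝔤_*. -/

import Mathlib

open Set Manifold Topology

noncomputable section

variable {E : Type*} [NormedAddCommGroup E] [NormedSpace ℝ E]
  {H : Type*} [TopologicalSpace H]

/-- A (raw) vector field on the manifold `M`, given by a choice of tangent vector at every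
point.  A *local* vector field defined on an open set `U ⊆ M` is represented by such a global
assignment, where only the values on `U` are relevant. -/
abbrev VF (I : ModelWithCorners ℝ E H) (M : Type*) [TopologicalSpace M] [ChartedSpace H M] :
    Type _ :=
  (x : M) → TangentSpace I x

variable (I : ModelWithCorners ℝ E H) (M : Type*) [TopologicalSpace M] [ChartedSpace H M]
  [IsManifold I (⊤ : ℕ∞) M]

/-- Smoothness (`C^∞`) of a vector field on a subset `U` of `M`, as smoothness of the
corresponding section of the tangent bundle. -/
def IsSmoothVFOn (X : VF I M) (U : Set M) : Prop :=
  ContMDiffOn I I.tangent (⊤ : ℕ∞) (fun x => (⟨x, X x⟩ : TangentBundle I M)) U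

/-- A sheaf of local vector fields on the manifold `M`: to every connected open set `U ⊆ M` it
assigns a linear subspace `carrier U` of the smooth vector fields on `U` (represented by global
assignments of tangent vectors, two of which describe the same local field on `U` iff they agree
on `U`), closed under restriction to connected open subsets and satisfying the gluing axiom. -/
structure VFSheaf where
  carrier : Set M → Set (VF I M)
  smooth_mem : ∀ U, IsOpen U → IsConnected U → ∀ X ∈ carrier U, IsSmoothVFOn I M X U
  zero_mem : ∀ U, IsOpen U → IsConnected U → (0 : VF I M) ∈ carrier U
  add_mem : ∀ U, IsOpen U → IsConnected U → ∀ X ∈ carrier U, ∀ Y ∈ carrier U, X + Y ∈ carrier U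
  smul_mem : ∀ U, IsOpen U → IsConnected U → ∀ (c : ℝ), ∀ X ∈ carrier U, c • X ∈ carrier U
  congr_mem : ∀ U, IsOpen U → IsConnected U → ∀ X ∈ carrier U, ∀ Y : VF I M,
    (∀ x ∈ U, Y x = X x) → Y ∈ carrier U
  restrict_mem : ∀ U, IsOpen U → IsConnected U → ∀ V, IsOpen V → IsConnected V → V ⊆ U →
    ∀ X ∈ carrier U, X ∈ carrier V
  glue_mem : ∀ U, IsOpen U → IsConnected U → ∀ S : Set (Set M),
    (∀ V ∈ S, IsOpen V ∧ IsConnected V) → U = ⋃₀ S → ∀ X : VF I M, IsSmoothVFOn I M X U →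
    (∀ V ∈ S, X ∈ carrier V) → X ∈ carrier U

variable {I M}

/-- The unique continuation property for a sheaf of local vector fields: a field of the sheaf
on a connected open set vanishing on some non-empty open subset vanishes identically. -/
def VFSheaf.UniqueContinuation (F : VFSheaf I M) : Prop :=
  ∀ U, IsOpen U → IsConnected U → ∀ X ∈ F.carrier U,
    (∃ V : Set M, V.Nonempty ∧ IsOpen V ∧ V ⊆ U ∧ ∀ x ∈ V, X x = 0) → ∀ x ∈ U, X x = 0

variable (I M) in
/-- Restriction of global tangent-vector assignments to a subset `U`, as a linear map. -/
def resVF (U : Set M) : VF I M →ₗ[ℝ] ((x : U) → TangentSpace I (x : M)) where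
  toFun X := fun x => X x
  map_add' _ _ := rfl
  map_smul' _ _ := rfl

/-- The dimension (as a cardinal) of the space `𝓕(U)` of local fields of the sheaf `F` on `U`,
computed as the rank of the space of restrictions to `U` of members of `F.carrier U`. -/
def fdim (F : VFSheaf I M) (U : Set M) : Cardinal :=
  Module.rank ℝ ↥(Submodule.span ℝ (resVF I M U '' F.carrier U))

/-- A sheaf of local vector fields has bounded rank if the dimensions of the spaces `𝓕(U)`,
`U` connected open, are uniformly bounded. -/
def VFSheaf.BoundedRank (F : VFSheaf I M) : Prop :=
  ∃ N : ℕ, ∀ U : Set M, IsOpen U → IsConnected U → fdim F U ≤ (N : Cardinal)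

/-- A sheaf of local vector fields is admissible if it has the unique continuation property
and bounded rank. -/
def VFSheaf.Admissible (F : VFSheaf I M) : Prop :=
  F.UniqueContinuation ∧ F.BoundedRank

/-- `κ^𝓕_p`: the supremum (= maximum) of `dim 𝓕(U)` over connected open neighbourhoods `U`
of `p`. -/
def kappa (F : VFSheaf I M) (p : M) : Cardinal :=
  ⨆ U : {U : Set M // IsOpen U ∧ IsConnected U ∧ p ∈ U}, fdim F (U : Set M)

/-- A sheaf of local vector fields is regular if `p ↦ κ^𝓕_p` is constant on `M`. -/
def VFSheaf.Regular (F : VFSheaf I M) : Prop :=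
  ∀ p q : M, kappa F p = kappa F q

section Germs

variable (I M) in
/-- The subspace of tangent-vector assignments vanishing on some connected open neighbourhood
of `p`; the quotient by this subspace is the space of germs at `p`. -/
def germNull [LocallyConnectedSpace M] (p : M) : Submodule ℝ (VF I M) where
  carrier := {X | ∃ V : Set M, IsOpen V ∧ IsConnected V ∧ p ∈ V ∧ ∀ x ∈ V, X x = 0}
  zero_mem' :=
    ⟨connectedComponentIn univ p, isOpen_univ.connectedComponentIn,
      isConnected_connectedComponentIn_iff.mpr (mem_univ p),
      mem_connectedComponentIn (mem_univ p), fun _ _ => rfl⟩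
  add_mem' := by
    rintro X Y ⟨V₁, hV₁o, hV₁c, hpV₁, hX⟩ ⟨V₂, hV₂o, hV₂c, hpV₂, hY⟩
    refine ⟨connectedComponentIn (V₁ ∩ V₂) p, (hV₁o.inter hV₂o).connectedComponentIn,
      isConnected_connectedComponentIn_iff.mpr ⟨hpV₁, hpV₂⟩,
      mem_connectedComponentIn ⟨hpV₁, hpV₂⟩, fun x hx => ?_⟩
    have hx' := connectedComponentIn_subset (V₁ ∩ V₂) p hx
    show X x + Y x = 0
    rw [hX x hx'.1, hY x hx'.2, add_zero]
  smul_mem' := by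
    rintro c X ⟨V, hVo, hVc, hpV, hX⟩
    exact ⟨V, hVo, hVc, hpV, fun x hx => by show c • X x = 0; rw [hX x hx, smul_zero]⟩

variable (I M) in
/-- The space of germs at `p` of (arbitrary) local vector fields on `M`. -/
abbrev GermSpace [LocallyConnectedSpace M] (p : M) : Type _ :=
  VF I M ⧸ germNull I M p

variable (I M) in
/-- The germ at `p` of a local vector field, as a linear map. -/
def germAt [LocallyConnectedSpace M] (p : M) : VF I M →ₗ[ℝ] GermSpace I M p :=
  (germNull I M p).mkQ

/-- `𝔊^𝓕_p`: the space of germs at `p` of local `𝓕`-fields of the sheaf `F`, i.e. germs at `p`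
of fields `K ∈ 𝓕(U)` with `U` a connected open neighbourhood of `p`. -/
def stalk [LocallyConnectedSpace M] (F : VFSheaf I M) (p : M) :
    Submodule ℝ (GermSpace I M p) :=
  Submodule.span ℝ {g | ∃ U : Set M, ∃ X : VF I M,
    IsOpen U ∧ IsConnected U ∧ p ∈ U ∧ X ∈ F.carrier U ∧ g = germAt I M p X}

/-- A connected open set `U ∋ p` is `𝓕`-special for `p` if the (linear) germ map
`𝓕(U) → 𝔊^𝓕_p` is a linear isomorphism, i.e. it is injective (fields in `𝓕(U)` with the same
germ at `p` agree on `U`) and surjective onto the space of `𝓕`-germs at `p`. -/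
def IsSpecial [LocallyConnectedSpace M] (F : VFSheaf I M) (U : Set M) (p : M) : Prop :=
  IsOpen U ∧ IsConnected U ∧ p ∈ U ∧
    (∀ K₁ ∈ F.carrier U, ∀ K₂ ∈ F.carrier U,
      germAt I M p K₁ = germAt I M p K₂ → ∀ x ∈ U, K₁ x = K₂ x) ∧
    (∀ g ∈ stalk F p, ∃ K ∈ F.carrier U, germAt I M p K = g)

/-- A transport of `𝓕`-germs along the curve `γ : [a,b] → M`: a family of germs
`g t ∈ 𝔊^𝓕_{γ t}` which is locally induced by a single local field of the sheaf `F`. -/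
def IsTransport [LocallyConnectedSpace M] (F : VFSheaf I M) (a b : ℝ) (γ : ℝ → M)
    (g : (t : ℝ) → GermSpace I M (γ t)) : Prop :=
  ∀ t₀ ∈ Icc a b, ∃ ε > (0 : ℝ), ∃ U : Set M, ∃ K : VF I M,
    IsOpen U ∧ IsConnected U ∧ K ∈ F.carrier U ∧
    ∀ t ∈ Ioo (t₀ - ε) (t₀ + ε) ∩ Icc a b, γ t ∈ U ∧ g t = germAt I M (γ t) K

end Germs

/-!
Unique continuation makes germs rigid: two fields of `𝓕` on a connected open set with the same
germ at one point agree on the whole set. Hence, near any time, whether two transports agree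
does not change, so the set of times where they agree is open and closed in `[a, b]`.

For existence, bounded rank turns the supremum defining `κ_p` into a maximum, attained on some
connected neighbourhood `U` of `p`. For `W ⊆ U` connected open, restriction `𝓕(U) → 𝓕(W)` is
injective by unique continuation, hence bijective as soon as `dim 𝓕(W) ≤ dim 𝓕(U)`. So every
`𝓕`-germ at a point `q ∈ U` with `κ_q ≤ dim 𝓕(U)` is the germ of a field on all of `U`. As `κ` is
constant along `γ`, a transport on `[a, c]` continues by such a field across a whole
neighbourhood of `c`, and the set of `c` up to which a transport exists is open and closed.
-/

lemma IsPreconnected.iff_of_eventually_iff {α : Type*} [TopologicalSpace α] {s : Set α}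
    (hs : IsPreconnected s) {p : α → Prop} (h : ∀ x ∈ s, ∀ᶠ y in 𝓝[s] x, p y ↔ p x)
    {x y : α} (hx : x ∈ s) (hy : y ∈ s) : p x ↔ p y :=
  hs.induction₂ (fun x y => p x ↔ p y) (fun x hx => (h x hx).mono fun _ h => h.symm)
    (fun _ _ _ _ _ _ hxy hyz => hxy.trans hyz) (fun _ _ _ _ h => h.symm) hx hy

def VFSheaf.sections (F : VFSheaf I M) {U : Set M} (hU : IsOpen U) (hUc : IsConnected U) :
    Submodule ℝ (VF I M) where
  carrier := F.carrier U
  add_mem' hX hY := F.add_mem U hU hUc _ hX _ hY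
  zero_mem' := F.zero_mem U hU hUc
  smul_mem' c _ hX := F.smul_mem U hU hUc c _ hX

lemma fdim_eq_rank (F : VFSheaf I M) {U : Set M} (hU : IsOpen U) (hUc : IsConnected U) :
    fdim F U = Module.rank ℝ (Submodule.map (resVF I M U) (F.sections hU hUc)) := by
  rw [fdim, ← Submodule.span_eq (Submodule.map _ _), Submodule.map_coe]
  rfl

lemma finiteDimensional_map_sections {F : VFSheaf I M} (hF : F.BoundedRank) {U : Set M}
    (hU : IsOpen U) (hUc : IsConnected U) :
    FiniteDimensional ℝ (Submodule.map (resVF I M U) (F.sections hU hUc)) := by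
  obtain ⟨N, hN⟩ := hF
  have := Module.Free.of_divisionRing ℝ (Submodule.map (resVF I M U) (F.sections hU hUc))
  refine Module.rank_lt_aleph0_iff.mp ?_
  rw [← fdim_eq_rank F]
  exact (hN U hU hUc).trans_lt (Cardinal.natCast_lt_aleph0)

def restrictVF {U W : Set M} (h : W ⊆ U) :
    ((x : U) → TangentSpace I (x : M)) →ₗ[ℝ] ((x : W) → TangentSpace I (x : M)) :=
  LinearMap.pi fun x => LinearMap.proj (Set.inclusion h x)

lemma exists_eqOn_of_fdim_le {F : VFSheaf I M} (hF : F.Admissible) {U W : Set M}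
    (hU : IsOpen U) (hUc : IsConnected U) (hW : IsOpen W) (hWc : IsConnected W)
    (hWU : W ⊆ U) (hdim : fdim F W ≤ fdim F U) {L : VF I M} (hL : L ∈ F.carrier W) :
    ∃ K ∈ F.carrier U, EqOn K L W := by
  set RU := Submodule.map (resVF I M U) (F.sections hU hUc)
  set RW := Submodule.map (resVF I M W) (F.sections hW hWc)
  have hmaps : ∀ f ∈ RU, restrictVF hWU f ∈ RW := by
    rintro _ ⟨X, hX, rfl⟩
    exact ⟨X, F.restrict_mem U hU hUc W hW hWc hWU X hX, rfl⟩
  let φ : RU →ₗ[ℝ] RW := (restrictVF hWU).restrict hmaps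
  have hφ : Function.Injective φ := by
    rw [← LinearMap.ker_eq_bot, eq_bot_iff]
    rintro ⟨_, X, hX, rfl⟩ hker
    have hXW : ∀ x ∈ W, X x = 0 := fun x hx => congrFun (Subtype.ext_iff.mp hker) ⟨x, hx⟩
    have hXU := hF.1 U hU hUc X hX ⟨W, hWc.nonempty, hW, hWU, hXW⟩
    exact (Submodule.mem_bot ℝ).mpr (Subtype.ext (funext fun x => hXU x x.2))
  have hrank : Module.rank ℝ RU = Module.rank ℝ RW :=
    le_antisymm (LinearMap.rank_le_of_injective φ hφ)
      (by rw [← fdim_eq_rank F, ← fdim_eq_rank F]; exact hdim)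
  have := finiteDimensional_map_sections hF.2 hU hUc
  have := finiteDimensional_map_sections hF.2 hW hWc
  obtain ⟨⟨_, K, hK, rfl⟩, hKL⟩ :=
    (LinearMap.injective_iff_surjective_of_finrank_eq_finrank (congrArg Cardinal.toNat hrank)).mp
      hφ ⟨resVF I M W L, L, hL, rfl⟩
  exact ⟨K, hK, fun x hx => congrFun (Subtype.ext_iff.mp hKL) ⟨x, hx⟩⟩

lemma fdim_le_kappa {F : VFSheaf I M} (hF : F.BoundedRank) {U : Set M} {p : M} (hU : IsOpen U)
    (hUc : IsConnected U) (hp : p ∈ U) : fdim F U ≤ kappa F p := by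
  obtain ⟨N, hN⟩ := hF
  exact le_ciSup (f := fun V : {V : Set M // IsOpen V ∧ IsConnected V ∧ p ∈ V} => fdim F V)
    ⟨N, by rintro _ ⟨V, rfl⟩; exact hN V V.2.1 V.2.2.1⟩ ⟨U, hU, hUc, hp⟩

section LocallyConnected

variable [LocallyConnectedSpace M]

lemma exists_fdim_eq_kappa {F : VFSheaf I M} (hF : F.BoundedRank) (p : M) :
    ∃ U, IsOpen U ∧ IsConnected U ∧ p ∈ U ∧ fdim F U = kappa F p := by
  obtain ⟨N, hN⟩ := hF
  set dims := range fun V : {V : Set M // IsOpen V ∧ IsConnected V ∧ p ∈ V} => fdim F V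
  obtain ⟨U₀, ⟨hU₀, hpU₀, hU₀c⟩, -⟩ :=
    (LocallyConnectedSpace.open_connected_basis p).mem_iff.mp Filter.univ_mem
  have hne : dims.Nonempty := ⟨_, ⟨U₀, hU₀, hU₀c, hpU₀⟩, rfl⟩
  have hfin : dims.Finite := by
    refine ((finite_Iic N).image (Nat.cast : ℕ → Cardinal)).subset ?_
    rintro _ ⟨V, rfl⟩
    have hVN := hN V V.2.1 V.2.2.1
    obtain ⟨n, hn⟩ := Cardinal.lt_aleph0.mp (hVN.trans_lt Cardinal.natCast_lt_aleph0)
    rw [hn] at hVN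
    exact ⟨n, by exact_mod_cast hVN, hn.symm⟩
  obtain ⟨V, hV⟩ := hne.csSup_mem hfin
  exact ⟨V, V.2.1, V.2.2.1, V.2.2.2, hV⟩

omit [IsManifold I (⊤ : ℕ∞) M] in
lemma germAt_eq_of_eqOn {W : Set M} (hW : IsOpen W) (hWc : IsConnected W) {q : M} (hq : q ∈ W)
    {K L : VF I M} (h : EqOn K L W) : germAt I M q K = germAt I M q L :=
  (Submodule.Quotient.eq _).mpr ⟨W, hW, hWc, hq, fun _ hx => sub_eq_zero.mpr (h hx)⟩

lemma eqOn_of_germAt_eq {F : VFSheaf I M} (hF : F.UniqueContinuation) {W : Set M}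
    (hW : IsOpen W) (hWc : IsConnected W) {q : M} (hq : q ∈ W) {K L : VF I M}
    (hK : K ∈ F.carrier W) (hL : L ∈ F.carrier W) (h : germAt I M q K = germAt I M q L) :
    EqOn K L W := by
  obtain ⟨V, hV, -, hqV, hKL⟩ := (Submodule.Quotient.eq _).mp h
  have hvanish := hF W hW hWc _ ((F.sections hW hWc).sub_mem hK hL)
    ⟨V ∩ W, ⟨q, hqV, hq⟩, hV.inter hW, inter_subset_right, fun x hx => hKL x hx.1⟩
  exact fun x hx => sub_eq_zero.mp (hvanish x hx)

lemma germAt_mem_stalk {F : VFSheaf I M} {V : Set M} (hV : IsOpen V) (hVc : IsConnected V)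
    {q : M} (hq : q ∈ V) {K : VF I M} (hK : K ∈ F.carrier V) : germAt I M q K ∈ stalk F q :=
  Submodule.subset_span ⟨V, K, hV, hVc, hq, hK, rfl⟩

lemma exists_germAt_eq_of_kappa_le {F : VFSheaf I M} (hF : F.Admissible) {U : Set M}
    (hU : IsOpen U) (hUc : IsConnected U) {q : M} (hq : q ∈ U) (hκ : kappa F q ≤ fdim F U)
    {g : GermSpace I M q} (hg : g ∈ stalk F q) : ∃ K ∈ F.carrier U, germAt I M q K = g := by
  suffices stalk F q ≤ Submodule.map (germAt I M q) (F.sections hU hUc) from this hg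
  refine Submodule.span_le.mpr ?_
  rintro _ ⟨V, L, hV, hVc, hqV, hL, rfl⟩
  obtain ⟨W, ⟨hW, hqW, hWc⟩, hWUV⟩ := (LocallyConnectedSpace.open_connected_basis q).mem_iff.mp
    ((hU.inter hV).mem_nhds ⟨hq, hqV⟩)
  obtain ⟨K, hK, hKL⟩ := exists_eqOn_of_fdim_le hF hU hUc hW hWc
    (hWUV.trans inter_subset_left) ((fdim_le_kappa hF.2 hW hWc hqW).trans hκ)
    (F.restrict_mem V hV hVc W hW hWc (hWUV.trans inter_subset_right) L hL)
  exact ⟨K, hK, germAt_eq_of_eqOn hW hWc hqW hKL⟩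

lemma eventually_germAt_eq_iff {F : VFSheaf I M} (hF : F.UniqueContinuation) {U V : Set M}
    (hU : IsOpen U) (hUc : IsConnected U) (hV : IsOpen V) (hVc : IsConnected V) {K L : VF I M}
    (hK : K ∈ F.carrier U) (hL : L ∈ F.carrier V) {p : M} (hp : p ∈ U ∩ V) :
    ∀ᶠ q in 𝓝 p, germAt I M q K = germAt I M q L ↔ germAt I M p K = germAt I M p L := by
  obtain ⟨W, ⟨hW, hpW, hWc⟩, hWUV⟩ :=
    (LocallyConnectedSpace.open_connected_basis p).mem_iff.mp ((hU.inter hV).mem_nhds hp)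
  have hKW := F.restrict_mem U hU hUc W hW hWc (hWUV.trans inter_subset_left) K hK
  have hLW := F.restrict_mem V hV hVc W hW hWc (hWUV.trans inter_subset_right) L hL
  filter_upwards [hW.mem_nhds hpW] with q hqW
  exact ⟨fun h => germAt_eq_of_eqOn hW hWc hpW (eqOn_of_germAt_eq hF hW hWc hqW hKW hLW h),
    fun h => germAt_eq_of_eqOn hW hWc hqW (eqOn_of_germAt_eq hF hW hWc hpW hKW hLW h)⟩

section Transport

variable {F : VFSheaf I M} {a b : ℝ} {γ : ℝ → M} {g : (t : ℝ) → GermSpace I M (γ t)}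

lemma isTransport_iff_eventually : IsTransport F a b γ g ↔ ∀ t₀ ∈ Icc a b, ∃ U K,
    IsOpen U ∧ IsConnected U ∧ K ∈ F.carrier U ∧
      ∀ᶠ t in 𝓝[Icc a b] t₀, γ t ∈ U ∧ g t = germAt I M (γ t) K := by
  refine forall₂_congr fun t₀ _ => ?_
  simp only [Filter.Eventually, Metric.mem_nhdsWithin_iff, Real.ball_eq_Ioo]
  constructor
  · rintro ⟨ε, hε, U, K, hU, hUc, hK, h⟩
    exact ⟨U, K, hU, hUc, hK, ε, hε, h⟩
  · rintro ⟨U, K, hU, hUc, hK, ε, hε, h⟩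
    exact ⟨ε, hε, U, K, hU, hUc, hK, h⟩

lemma IsTransport.mono (hg : IsTransport F a b γ g) {c : ℝ} (hcb : c ≤ b) :
    IsTransport F a c γ g := fun t₀ ht₀ =>
  let ⟨ε, hε, U, K, hU, hUc, hK, h⟩ := hg t₀ ⟨ht₀.1, ht₀.2.trans hcb⟩
  ⟨ε, hε, U, K, hU, hUc, hK, fun t ht => h t ⟨ht.1, ht.2.1, ht.2.2.trans hcb⟩⟩

lemma IsTransport.mem_stalk (hg : IsTransport F a b γ g) {t : ℝ} (ht : t ∈ Icc a b) :
    g t ∈ stalk F (γ t) := by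
  obtain ⟨U, K, hU, hUc, hK, h⟩ := isTransport_iff_eventually.mp hg t ht
  obtain ⟨hγU, hgK⟩ := h.self_of_nhdsWithin ht
  exact hgK ▸ germAt_mem_stalk hU hUc hγU hK

lemma isTransport_germAt {U : Set M} (hU : IsOpen U) (hUc : IsConnected U) {K : VF I M}
    (hK : K ∈ F.carrier U) (hγU : ∀ t ∈ Icc a b, γ t ∈ U) :
    IsTransport F a b γ (fun t => germAt I M (γ t) K) :=
  fun _ _ => ⟨1, one_pos, U, K, hU, hUc, hK, fun t ht => ⟨hγU t ht.2, rfl⟩⟩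

lemma IsTransport.eventually_eq_germAt_iff (hF : F.UniqueContinuation)
    (hg : IsTransport F a b γ g) {t₀ : ℝ} (ht₀ : t₀ ∈ Icc a b)
    (hγ : ContinuousWithinAt γ (Icc a b) t₀) {U : Set M} (hU : IsOpen U) (hUc : IsConnected U)
    {K : VF I M} (hK : K ∈ F.carrier U) (hγU : γ t₀ ∈ U) :
    ∀ᶠ t in 𝓝[Icc a b] t₀, g t = germAt I M (γ t) K ↔ g t₀ = germAt I M (γ t₀) K := by
  obtain ⟨V, L, hV, hVc, hL, hgL⟩ := isTransport_iff_eventually.mp hg t₀ ht₀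
  obtain ⟨hγV, hgL₀⟩ := hgL.self_of_nhdsWithin ht₀
  filter_upwards [hgL, hγ.eventually (eventually_germAt_eq_iff hF hV hVc hU hUc hL hK ⟨hγV, hγU⟩)]
    with t hgt hiff
  rwa [hgt.2, hgL₀]

theorem IsTransport.eq_of_eq_at_left (hF : F.UniqueContinuation)
    (hγ : ContinuousOn γ (Icc a b)) (hg : IsTransport F a b γ g)
    {g' : (t : ℝ) → GermSpace I M (γ t)}
    (hg' : IsTransport F a b γ g') (ha : g a = g' a) {t : ℝ} (ht : t ∈ Icc a b) :
    g t = g' t := by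
  refine (isPreconnected_Icc.iff_of_eventually_iff (p := fun t => g t = g' t) (fun t₀ ht₀ => ?_)
    (left_mem_Icc.mpr (ht.1.trans ht.2)) ht).mp ha
  obtain ⟨V, L, hV, hVc, hL, hg'L⟩ := isTransport_iff_eventually.mp hg' t₀ ht₀
  obtain ⟨hγV, hg'L₀⟩ := hg'L.self_of_nhdsWithin ht₀
  filter_upwards [hg'L, hg.eventually_eq_germAt_iff hF ht₀ (hγ t₀ ht₀) hV hVc hL hγV]
    with t hg't hiff
  rwa [hg't.2, hg'L₀]

lemma IsTransport.piecewise (hF : F.UniqueContinuation) {c d : ℝ} (hg : IsTransport F a c γ g)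
    (hac : a ≤ c) (hcd : c ≤ d) (hγ : ContinuousOn γ (Icc a d)) {U : Set M} (hU : IsOpen U)
    (hUc : IsConnected U) {K : VF I M} (hK : K ∈ F.carrier U) (hγU : ∀ t ∈ Icc c d, γ t ∈ U)
    (hgK : g c = germAt I M (γ c) K) :
    IsTransport F a d γ (fun t => if t ≤ c then g t else germAt I M (γ t) K) := by
  refine isTransport_iff_eventually.mpr fun t₀ ht₀ => ?_
  rcases lt_or_ge t₀ c with hlt | hle
  · obtain ⟨V, L, hV, hVc, hL, h⟩ := isTransport_iff_eventually.mp hg t₀ ⟨ht₀.1, hlt.le⟩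
    refine ⟨V, L, hV, hVc, hL, ?_⟩
    rw [eventually_nhdsWithin_iff] at h ⊢
    filter_upwards [h, Iio_mem_nhds hlt] with t ht hct hta
    have htc : t ≤ c := le_of_lt hct
    simpa only [if_pos htc] using ht ⟨hta.1, htc⟩
  have hleft : ∀ᶠ t in 𝓝[Icc a d] t₀, t ≤ c → g t = germAt I M (γ t) K := by
    rcases hle.lt_or_eq with hlt | rfl
    · filter_upwards [mem_nhdsWithin_of_mem_nhds (Ioi_mem_nhds hlt)] with t hct htc
      exact absurd htc (not_le.mpr hct)
    · have h := hg.eventually_eq_germAt_iff hF ⟨hac, le_rfl⟩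
        ((hγ.mono (Icc_subset_Icc_right hcd)) c ⟨hac, le_rfl⟩) hU hUc hK (hγU c ⟨le_rfl, hcd⟩)
      rw [eventually_nhdsWithin_iff] at h ⊢
      filter_upwards [h] with t ht hta htc
      exact (ht ⟨hta.1, htc⟩).mpr hgK
  refine ⟨U, K, hU, hUc, hK, ?_⟩
  filter_upwards [hγ t₀ ht₀ (hU.mem_nhds (hγU t₀ ⟨hle, ht₀.2⟩)), hleft] with t hγt ht
  refine ⟨hγt, ?_⟩
  split_ifs with htc
  · exact ht htc
  · rfl

def HasTransport (F : VFSheaf I M) (a b : ℝ) (γ : ℝ → M) (g₀ : GermSpace I M (γ a)) : Prop :=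
  ∃ g : (t : ℝ) → GermSpace I M (γ t), IsTransport F a b γ g ∧ g a = g₀

lemma hasTransport_self (hF : F.Admissible) {g₀ : GermSpace I M (γ a)}
    (hg₀ : g₀ ∈ stalk F (γ a)) : HasTransport F a a γ g₀ := by
  obtain ⟨U, hU, hUc, hγU, hUκ⟩ := exists_fdim_eq_kappa hF.2 (γ a)
  obtain ⟨K, hK, hKg⟩ := exists_germAt_eq_of_kappa_le hF hU hUc hγU hUκ.ge hg₀
  refine ⟨_, isTransport_germAt hU hUc hK fun t ht => ?_, hKg⟩
  rwa [le_antisymm ht.2 ht.1]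

lemma HasTransport.extend (hF : F.Admissible) {g₀ : GermSpace I M (γ a)} {c d : ℝ}
    (h : HasTransport F a c γ g₀) (hac : a ≤ c) (hγ : ContinuousOn γ (Icc a d)) {U : Set M}
    (hU : IsOpen U) (hUc : IsConnected U) (hγU : ∀ t ∈ uIcc c d, γ t ∈ U)
    (hκ : kappa F (γ c) ≤ fdim F U) : HasTransport F a d γ g₀ := by
  obtain ⟨g, hg, hga⟩ := h
  rcases le_total d c with hdc | hcd
  · exact ⟨g, hg.mono hdc, hga⟩
  obtain ⟨K, hK, hKg⟩ := exists_germAt_eq_of_kappa_le hF hU hUc (hγU c left_mem_uIcc) hκ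
    (hg.mem_stalk ⟨hac, le_rfl⟩)
  refine ⟨_, hg.piecewise hF.1 hac hcd hγ hU hUc hK (fun t ht => hγU t (Icc_subset_uIcc ht))
    hKg.symm, ?_⟩
  simp only [if_pos hac, hga]

theorem hasTransport_of_kappa_eq (hF : F.Admissible) (hab : a ≤ b)
    (hγ : ContinuousOn γ (Icc a b))
    (hκ : ∀ t ∈ Icc a b, ∀ t' ∈ Icc a b, kappa F (γ t) = kappa F (γ t'))
    {g₀ : GermSpace I M (γ a)} (hg₀ : g₀ ∈ stalk F (γ a)) : HasTransport F a b γ g₀ := by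
  refine (isPreconnected_Icc.iff_of_eventually_iff (p := fun c => HasTransport F a c γ g₀)
    (fun c hc => ?_) (left_mem_Icc.mpr hab) (right_mem_Icc.mpr hab)).mp (hasTransport_self hF hg₀)
  obtain ⟨U, hU, hUc, hγU, hUκ⟩ := exists_fdim_eq_kappa hF.2 (γ c)
  obtain ⟨ε, hε, hεU⟩ := Metric.mem_nhdsWithin_iff.mp (hγ c hc (hU.mem_nhds hγU))
  have hJ : OrdConnected (Metric.ball c ε ∩ Icc a b) := by
    rw [Real.ball_eq_Ioo]
    exact ordConnected_Ioo.inter ordConnected_Icc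
  filter_upwards [inter_comm (Icc a b) _ ▸ inter_mem_nhdsWithin _ (Metric.ball_mem_nhds c hε)]
    with d hd
  have hγU' : ∀ t ∈ uIcc c d, γ t ∈ U :=
    fun t ht => hεU (hJ.uIcc_subset ⟨Metric.mem_ball_self hε, hc⟩ hd ht)
  exact ⟨fun h => h.extend hF hd.2.1 (hγ.mono (Icc_subset_Icc_right hc.2)) hU hUc
      (uIcc_comm c d ▸ hγU') (hUκ ▸ (hκ d hd.2 c hc).le),
    fun h => h.extend hF hc.1 (hγ.mono (Icc_subset_Icc_right hd.2.2)) hU hUc hγU' hUκ.ge⟩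

end Transport

end LocallyConnected

/-- Existence (and uniqueness) of transport along continuous paths on which
`κ^𝓕` is constant, for an admissible sheaf `𝓕`: every `𝓕`-germ at `γ a` admits a unique
transport of `𝓕`-germs along `γ` starting at it. -/
theorem statement9 [LocallyConnectedSpace M] (F : VFSheaf I M) (hF : F.Admissible)
    (a b : ℝ) (hab : a ≤ b) (γ : ℝ → M) (hγ : ContinuousOn γ (Icc a b))
    (hconst : ∀ t ∈ Icc a b, ∀ t' ∈ Icc a b, kappa F (γ t) = kappa F (γ t'))
    (gstar : GermSpace I M (γ a)) (hgstar : gstar ∈ stalk F (γ a)) :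
    ∃ g : (t : ℝ) → GermSpace I M (γ t), IsTransport F a b γ g ∧ g a = gstar ∧
      ∀ g' : (t : ℝ) → GermSpace I M (γ t), IsTransport F a b γ g' → g' a = gstar →
        ∀ t ∈ Icc a b, g' t = g t := by
  obtain ⟨g, hg, hga⟩ := hasTransport_of_kappa_eq hF hab hγ hconst hgstar
  exact ⟨g, hg, hga, fun g' hg' hg'a t ht =>
    hg'.eq_of_eq_at_left hF.1 hγ hg (hg'a.trans hga.symm) ht⟩
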